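/- (Canonicity of closed typable terms of datatype-shaped types) Let t be a closed term of the pair pattern calculus typable in system P. If t has a functional type A→σ, then t reduces to an abstraction; if t has a product type ⟨A,B⟩, then t reduces to a pair. -/

import Mathlib

/-! # The pair pattern calculus Λ_p and the type system P -/

/-- Patterns: p ::= x | ⟨p,q⟩ -/
inductive Pat : Type
  | var : ℕ → Pat
  | pair : Pat → Pat → Pat
  deriving DecidableEq

/-- Free variables of a pattern. -/
def Pat.fv : Pat → Finset ℕ
  | .var x => {x}
  | .pair p q => p.fv ∪ q.fv

/-- Linearity: every variable occurs at most once in the pattern. -/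
def Pat.Linear : Pat → Prop
  | .var _ => True
  | .pair p q => p.Linear ∧ q.Linear ∧ Disjoint p.fv q.fv

/-- Terms: t ::= x | λp.t | ⟨t,u⟩ | t u | t[p/u] | fail -/
inductive Tm : Type
  | var : ℕ → Tm
  | lam : Pat → Tm → Tm
  | pair : Tm → Tm → Tm
  | app : Tm → Tm → Tm
  | esub : Tm → Pat → Tm → Tm   -- explicit matching t[p/u]
  | fail : Tm
  deriving DecidableEq

/-- Free variables of a term. -/
def Tm.fv : Tm → Finset ℕ
  | .var x => {x}
  | .lam p t => t.fv \ p.fv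
  | .pair t u => t.fv ∪ u.fv
  | .app t u => t.fv ∪ u.fv
  | .esub t p u => (t.fv \ p.fv) ∪ u.fv
  | .fail => ∅

/-- Substitution of u for the free occurrences of x. -/
def Tm.subst (x : ℕ) (u : Tm) : Tm → Tm
  | .var y => if y = x then u else .var y
  | .lam p t => if x ∈ p.fv then .lam p t else .lam p (Tm.subst x u t)
  | .pair a b => .pair (Tm.subst x u a) (Tm.subst x u b)
  | .app a b => .app (Tm.subst x u a) (Tm.subst x u b)
  | .esub t p v => .esub (if x ∈ p.fv then t else Tm.subst x u t) p (Tm.subst x u v)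
  | .fail => .fail

/-- List contexts L ::= □ | L[p/t], represented as lists of explicit matchings
(head = outermost). -/
abbrev LCtx : Type := List (Pat × Tm)

/-- Plugging a term in a list context. -/
def LCtx.plug : LCtx → Tm → Tm
  | [], t => t
  | (p, u) :: L, t => .esub (LCtx.plug L t) p u

/-- Root reduction rules (r₁)–(r₉). -/
inductive Root : Tm → Tm → Prop
  | r1 (L : LCtx) (p t u) : Root (.app (L.plug (.lam p t)) u) (L.plug (.esub t p u))
  | r2 (t x u) : Root (.esub t (.var x) u) (Tm.subst x u t)
  | r3 (t p₁ p₂ L u₁ u₂) :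
      Root (.esub t (.pair p₁ p₂) (LCtx.plug L (.pair u₁ u₂)))
           (LCtx.plug L (.esub (.esub t p₁ u₁) p₂ u₂))
  | r4 (t p₁ p₂ L q u) : Root (.esub t (.pair p₁ p₂) (LCtx.plug L (.lam q u))) .fail
  | r5 (L : LCtx) (t u v) : Root (.app (L.plug (.pair t u)) v) .fail
  | r6 (t p₁ p₂) : Root (.esub t (.pair p₁ p₂) .fail) .fail
  | r7 (L : LCtx) : L ≠ [] → Root (L.plug .fail) .fail
  | r8 (t) : Root (.app .fail t) .fail
  | r9 (p) : Root (.lam p .fail) .fail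

/-- The reduction relation: contextual closure of the root rules. -/
inductive Step : Tm → Tm → Prop
  | root {t t'} : Root t t' → Step t t'
  | lam {t t'} (p) : Step t t' → Step (.lam p t) (.lam p t')
  | pairL {t t'} (u) : Step t t' → Step (.pair t u) (.pair t' u)
  | pairR {u u'} (t) : Step u u' → Step (.pair t u) (.pair t u')
  | appL {t t'} (u) : Step t t' → Step (.app t u) (.app t' u)
  | appR {u u'} (t) : Step u u' → Step (.app t u) (.app t u')
  | subL {t t'} (p u) : Step t t' → Step (.esub t p u) (.esub t' p u)
  | subR {u u'} (t p) : Step u u' → Step (.esub t p u) (.esub t p u')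

/-- Root rules without the substitution rule (r₂). -/
inductive RootA0 : Tm → Tm → Prop
  | r1 (L : LCtx) (p t u) : RootA0 (.app (L.plug (.lam p t)) u) (L.plug (.esub t p u))
  | r3 (t p₁ p₂ L u₁ u₂) :
      RootA0 (.esub t (.pair p₁ p₂) (LCtx.plug L (.pair u₁ u₂)))
             (LCtx.plug L (.esub (.esub t p₁ u₁) p₂ u₂))
  | r4 (t p₁ p₂ L q u) : RootA0 (.esub t (.pair p₁ p₂) (LCtx.plug L (.lam q u))) .fail
  | r5 (L : LCtx) (t u v) : RootA0 (.app (L.plug (.pair t u)) v) .fail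
  | r6 (t p₁ p₂) : RootA0 (.esub t (.pair p₁ p₂) .fail) .fail
  | r7 (L : LCtx) : L ≠ [] → RootA0 (L.plug .fail) .fail
  | r8 (t) : RootA0 (.app .fail t) .fail
  | r9 (p) : RootA0 (.lam p .fail) .fail

/-- Reduction without rule (r₂). -/
inductive StepA0 : Tm → Tm → Prop
  | root {t t'} : RootA0 t t' → StepA0 t t'
  | lam {t t'} (p) : StepA0 t t' → StepA0 (.lam p t) (.lam p t')
  | pairL {t t'} (u) : StepA0 t t' → StepA0 (.pair t u) (.pair t' u)
  | pairR {u u'} (t) : StepA0 u u' → StepA0 (.pair t u) (.pair t u')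
  | appL {t t'} (u) : StepA0 t t' → StepA0 (.app t u) (.app t' u)
  | appR {u u'} (t) : StepA0 u u' → StepA0 (.app t u) (.app t u')
  | subL {t t'} (p u) : StepA0 t t' → StepA0 (.esub t p u) (.esub t' p u)
  | subR {u u'} (t p) : StepA0 u u' → StepA0 (.esub t p u) (.esub t p u')

/-- Many-step reduction. -/
abbrev Steps : Tm → Tm → Prop := Relation.ReflTransGen Step

/-! ## Types and the type system P -/

/-- Types σ ::= α | ⟨A,B⟩ | A → σ, where multiset types A are represented
as lists of types. -/
inductive Ty : Type
  | base : ℕ → Ty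
  | prod : List Ty → List Ty → Ty
  | arr : List Ty → Ty → Ty

/-- Typing environments: functions from variables to multiset types. -/
def Env : Type := ℕ → List Ty

/-- Sum of environments (pointwise multiset union). -/
def Env.add (Γ Δ : Env) : Env := fun x => Γ x ++ Δ x

/-- Empty environment. -/
def Env.empty : Env := fun _ => []

/-- The environment x : A. -/
def Env.single (x : ℕ) (A : List Ty) : Env := fun y => if y = x then A else []

/-- Γ|_p : restriction of Γ to the free variables of p. -/
def Env.restrict (Γ : Env) (p : Pat) : Env := fun x => if x ∈ p.fv then Γ x else []

/-- Γ \ Γ|_p. -/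
def Env.erase (Γ : Env) (p : Pat) : Env := fun x => if x ∈ p.fv then [] else Γ x

/-- Pattern typing Γ ⊩ p : A. -/
inductive PatTy : Env → Pat → List Ty → Prop
  | var (x : ℕ) (A : List Ty) : PatTy (Env.single x A) (.var x) A
  | pair {Γ Δ p q A B} : PatTy Γ p A → PatTy Δ q B → Disjoint p.fv q.fv →
      PatTy (Γ.add Δ) (.pair p q) [Ty.prod A B]

mutual
  /-- Typing derivations Γ ⊢ t : σ of system P (rules ax, abs, app, pair, sub). -/
  inductive TDeriv : Env → Tm → Ty → Type
    | ax (x : ℕ) (σ : Ty) : TDeriv (Env.single x [σ]) (.var x) σ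
    | abs {Γ t σ p A} : TDeriv Γ t σ → PatTy (Γ.restrict p) p A →
        TDeriv (Γ.erase p) (.lam p t) (.arr A σ)
    | app {Γ Δ t u A σ} : TDeriv Γ t (.arr A σ) → MDeriv Δ u A →
        TDeriv (Γ.add Δ) (.app t u) σ
    | pair {Γ Δ t u A B} : MDeriv Γ t A → MDeriv Δ u B →
        TDeriv (Γ.add Δ) (.pair t u) (.prod A B)
    | esub {Γ Δ t σ p A u} : TDeriv Γ t σ → PatTy (Γ.restrict p) p A → MDeriv Δ u A →
        TDeriv ((Γ.erase p).add Δ) (.esub t p u) σ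
  /-- Multiset typing derivations Γ ⊢ t : A (the rule (many)). -/
  inductive MDeriv : Env → Tm → List Ty → Type
    | nil (t : Tm) : MDeriv Env.empty t []
    | cons {Γ Δ t σ A} : TDeriv Γ t σ → MDeriv Δ t A → MDeriv (Γ.add Δ) t (σ :: A)
end

mutual
  /-- The measure of a derivation: number of typing rules except (many). -/
  def measT : ∀ {Γ t σ}, TDeriv Γ t σ → ℕ
    | _, _, _, .ax _ _ => 1
    | _, _, _, .abs d _ => measT d + 1
    | _, _, _, .app d m => measT d + measM m + 1
    | _, _, _, .pair m n => measM m + measM n + 1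
    | _, _, _, .esub d _ m => measT d + measM m + 1
  def measM : ∀ {Γ t A}, MDeriv Γ t A → ℕ
    | _, _, _, .nil _ => 0
    | _, _, _, .cons d m => measT d + measM m
end

/-- Term contexts with a single hole. -/
inductive TmCtx : Type
  | hole : TmCtx
  | lam : Pat → TmCtx → TmCtx
  | pairL : TmCtx → Tm → TmCtx
  | pairR : Tm → TmCtx → TmCtx
  | appL : TmCtx → Tm → TmCtx
  | appR : Tm → TmCtx → TmCtx
  | subL : TmCtx → Pat → Tm → TmCtx
  | subR : Tm → Pat → TmCtx → TmCtx

/-- Plugging a term in a term context. -/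
def TmCtx.plug : TmCtx → Tm → Tm
  | .hole, t => t
  | .lam p C, t => .lam p (C.plug t)
  | .pairL C u, t => .pair (C.plug t) u
  | .pairR u C, t => .pair u (C.plug t)
  | .appL C u, t => .app (C.plug t) u
  | .appR u C, t => .app u (C.plug t)
  | .subL C p u, t => .esub (C.plug t) p u
  | .subR u p C, t => .esub u p (C.plug t)

mutual
  /-- Typed occurrences of a derivation. -/
  def tocT : ∀ {Γ t σ}, TDeriv Γ t σ → Set TmCtx
    | _, _, _, .ax _ _ => {TmCtx.hole}
    | _, _, _, @TDeriv.abs _ _ _ p _ d _ =>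
        {TmCtx.hole} ∪ (TmCtx.lam p) '' tocT d
    | _, _, _, @TDeriv.app _ _ t u _ _ d m =>
        {TmCtx.hole} ∪ (fun C => TmCtx.appL C u) '' tocT d ∪ (fun C => TmCtx.appR t C) '' tocM m
    | _, _, _, @TDeriv.pair _ _ t u _ _ m n =>
        {TmCtx.hole} ∪ (fun C => TmCtx.pairL C u) '' tocM m ∪ (fun C => TmCtx.pairR t C) '' tocM n
    | _, _, _, @TDeriv.esub _ _ t _ p _ u d _ m =>
        {TmCtx.hole} ∪ (fun C => TmCtx.subL C p u) '' tocT d ∪ (fun C => TmCtx.subR t p C) '' tocM m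
  def tocM : ∀ {Γ t A}, MDeriv Γ t A → Set TmCtx
    | _, _, _, .nil _ => ∅
    | _, _, _, .cons d m => tocT d ∪ tocM m
end

/-- Head contexts H ::= □ | λp.H | H t | H[p/t]. -/
inductive HCtx : Type
  | hole : HCtx
  | lam : Pat → HCtx → HCtx
  | app : HCtx → Tm → HCtx
  | esub : HCtx → Pat → Tm → HCtx

/-- Plugging a term in a head context. -/
def HCtx.plug : HCtx → Tm → Tm
  | .hole, t => t
  | .lam p H, t => .lam p (H.plug t)
  | .app H u, t => .app (H.plug t) u
  | .esub H p u, t => .esub (H.plug t) p u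

mutual
  /-- K-canonical forms: K ::= x | K t | K[⟨p,q⟩/K]. -/
  inductive IsK : Tm → Prop
    | var (x : ℕ) : IsK (.var x)
    | app {t} (u) : IsK t → IsK (.app t u)
    | esub {t u} (p q) : IsK t → IsK u → IsK (.esub t (.pair p q) u)
  /-- Canonical forms: J ::= λp.J | ⟨t,t⟩ | K | J[⟨p,q⟩/K]. -/
  inductive IsJ : Tm → Prop
    | lam {t} (p) : IsJ t → IsJ (.lam p t)
    | pair (t u : Tm) : IsJ (.pair t u)
    | ofK {t} : IsK t → IsJ t
    | esub {t u} (p q) : IsJ t → IsK u → IsJ (.esub t (.pair p q) u)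
end

/-- Pure K-canonical forms: K′ ::= x | K′ t. -/
inductive IsK' : Tm → Prop
  | var (x : ℕ) : IsK' (.var x)
  | app {t} (u) : IsK' t → IsK' (.app t u)

/-- Pure canonical forms: J′ ::= λp.J′ | ⟨t,t⟩ | K′ | J′[⟨p,q⟩/K′]. -/
inductive IsJ' : Tm → Prop
  | lam {t} (p) : IsJ' t → IsJ' (.lam p t)
  | pair (t u : Tm) : IsJ' (.pair t u)
  | ofK {t} : IsK' t → IsJ' t
  | esub {t u} (p q) : IsJ' t → IsK' u → IsJ' (.esub t (.pair p q) u)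

/-- A multiset type is inhabited if some closed term has it. -/
def MInhab (A : List Ty) : Prop := ∃ u : Tm, u.fv = ∅ ∧ Nonempty (MDeriv Env.empty u A)

/-- An environment is inhabited if all the multiset types it assigns are inhabited. -/
def EnvInhab (Γ : Env) : Prop := ∀ x, Γ x ≠ [] → MInhab (Γ x)

/-- C₁ → ⋯ → Cₙ → σ. -/
def mkArr : List (List Ty) → Ty → Ty
  | [], σ => σ
  | A :: Cs, σ => .arr A (mkArr Cs σ)

/-- A term is solvable if some head context closes it and sends it to a pair. -/
def Solvable (t : Tm) : Prop :=
  ∃ H : HCtx, (H.plug t).fv = ∅ ∧ ∃ u v : Tm, Steps (H.plug t) (.pair u v)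


/-! A closed term can only be typed in the empty environment. Weak head reduction of such a
term (β, substitution, and matching a pair pattern against an argument first reduced to a
pair) keeps it typable in the empty environment, and strictly decreases the size of its typing
derivation: for substitution this is a quantitative substitution lemma. So reduction reaches an
abstraction or a pair, and the type of the derivation tells which. -/

-- Unlike `measT`, the rules (many) are counted, so that matching a pair pattern (r₃),
-- which drops one of them, strictly decreases the size.
mutual
def TDeriv.size : ∀ {Γ t σ}, TDeriv Γ t σ → ℕ
  | _, _, _, .ax _ _ => 1
  | _, _, _, .abs d _ => d.size + 1
  | _, _, _, .app d m => d.size + m.size + 1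
  | _, _, _, .pair m n => m.size + n.size + 1
  | _, _, _, .esub d _ m => d.size + m.size + 1
def MDeriv.size : ∀ {Γ t A}, MDeriv Γ t A → ℕ
  | _, _, _, .nil _ => 1
  | _, _, _, .cons d m => d.size + m.size + 1
end

namespace Env

theorem add_empty (Γ : Env) : Γ.add Env.empty = Γ :=
  funext fun _ => List.append_nil _

theorem add_eq_empty {Γ Δ : Env} (h : Γ.add Δ = Env.empty) :
    Γ = Env.empty ∧ Δ = Env.empty := by
  have h x : Γ x = [] ∧ Δ x = [] := List.append_eq_nil_iff.mp (congrFun h x)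
  exact ⟨funext fun x => (h x).1, funext fun x => (h x).2⟩

theorem empty_erase (p : Pat) : Env.empty.erase p = Env.empty := by
  funext y; simp [Env.erase, Env.empty]

theorem erase_add (Γ Δ : Env) (p : Pat) :
    (Γ.add Δ).erase p = (Γ.erase p).add (Δ.erase p) := by
  funext y; simp only [Env.erase, Env.add]; split_ifs <;> simp

theorem erase_comm (Γ : Env) (p q : Pat) : (Γ.erase p).erase q = (Γ.erase q).erase p := by
  funext y; simp only [Env.erase]; split_ifs <;> rfl

theorem erase_pair (Γ : Env) (p q : Pat) : Γ.erase (.pair p q) = (Γ.erase p).erase q := by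
  funext y; simp only [Env.erase, Pat.fv, Finset.mem_union]; split_ifs <;> simp_all

theorem erase_var_of_mem (Γ : Env) {p : Pat} {x : ℕ} (h : x ∈ p.fv) :
    (Γ.erase p).erase (.var x) = Γ.erase p := by
  funext y; simp only [Env.erase, Pat.fv, Finset.mem_singleton]; split_ifs <;> simp_all

theorem erase_apply_of_notMem (Γ : Env) {p : Pat} {x : ℕ} (h : x ∉ p.fv) :
    Γ.erase p x = Γ x := if_neg h

theorem restrict_erase_of_disjoint (Γ : Env) {p q : Pat} (h : Disjoint p.fv q.fv) :
    (Γ.erase p).restrict q = Γ.restrict q := by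
  funext y; simp only [Env.restrict, Env.erase]
  split_ifs with hq hp <;> first | rfl | exact absurd hq (Finset.disjoint_left.mp h hp)

theorem single_erase_self (x : ℕ) (A : List Ty) :
    (Env.single x A).erase (.var x) = Env.empty := by
  funext y; simp only [Env.erase, Env.single, Pat.fv, Finset.mem_singleton]; split_ifs <;> rfl

theorem single_erase_of_ne {x y : ℕ} (A : List Ty) (h : y ≠ x) :
    (Env.single y A).erase (.var x) = Env.single y A := by
  funext z; simp only [Env.erase, Env.single, Pat.fv, Finset.mem_singleton]
  split_ifs <;> simp_all

end Env

mutual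
theorem TDeriv.env_apply_eq_nil_of_notMem_fv :
    ∀ {Γ t σ}, TDeriv Γ t σ → ∀ {x}, x ∉ t.fv → Γ x = []
  | _, _, _, .ax y _, x, hx => by
    simp_all [Tm.fv, Env.single]
  | _, _, _, .abs d _, x, hx => by
    simp only [Tm.fv, Finset.mem_sdiff, not_and, not_not] at hx
    simp only [Env.erase]
    split_ifs with hxp
    · rfl
    · exact d.env_apply_eq_nil_of_notMem_fv (mt hx hxp)
  | _, _, _, .app d m, x, hx => by
    simp only [Tm.fv, Finset.mem_union, not_or] at hx
    simp [Env.add, d.env_apply_eq_nil_of_notMem_fv hx.1, m.env_apply_eq_nil_of_notMem_fv hx.2]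
  | _, _, _, .pair m n, x, hx => by
    simp only [Tm.fv, Finset.mem_union, not_or] at hx
    simp [Env.add, m.env_apply_eq_nil_of_notMem_fv hx.1, n.env_apply_eq_nil_of_notMem_fv hx.2]
  | _, _, _, .esub d _ m, x, hx => by
    simp only [Tm.fv, Finset.mem_union, Finset.mem_sdiff, not_or, not_and, not_not] at hx
    simp only [Env.add, Env.erase, m.env_apply_eq_nil_of_notMem_fv hx.2, List.append_nil]
    split_ifs with hxp
    · rfl
    · exact d.env_apply_eq_nil_of_notMem_fv (mt hx.1 hxp)
theorem MDeriv.env_apply_eq_nil_of_notMem_fv :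
    ∀ {Γ t A}, MDeriv Γ t A → ∀ {x}, x ∉ t.fv → Γ x = []
  | _, _, _, .nil _, _, _ => rfl
  | _, _, _, .cons d m, x, hx => by
    simp [Env.add, d.env_apply_eq_nil_of_notMem_fv hx, m.env_apply_eq_nil_of_notMem_fv hx]
end

theorem TDeriv.env_eq_empty_of_closed {Γ t σ} (d : TDeriv Γ t σ) (hc : t.fv = ∅) :
    Γ = Env.empty :=
  funext fun _ => d.env_apply_eq_nil_of_notMem_fv (by simp [hc])

theorem PatTy.apply_eq_nil_of_notMem {Δ p A} (h : PatTy Δ p A) {x : ℕ} (hx : x ∉ p.fv) :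
    Δ x = [] := by
  induction h with
  | var y B => simp_all [Pat.fv, Env.single]
  | pair _ _ _ ih₁ ih₂ =>
    simp only [Pat.fv, Finset.mem_union, not_or] at hx
    simp [Env.add, ih₁ hx.1, ih₂ hx.2]

theorem PatTy.eq_single {Δ x A} (h : PatTy Δ (.var x) A) : Δ = Env.single x A := by
  cases h; rfl

theorem PatTy.pair_inv {Γ : Env} {p q : Pat} {A : List Ty}
    (h : PatTy (Γ.restrict (.pair p q)) (.pair p q) A) :
    ∃ A₁ A₂, A = [.prod A₁ A₂] ∧ PatTy (Γ.restrict p) p A₁ ∧ PatTy (Γ.restrict q) q A₂ ∧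
      Disjoint p.fv q.fv := by
  generalize hΔ : Γ.restrict (.pair p q) = Δ at h
  cases h with
  | @pair Δ₁ Δ₂ _ _ A₁ A₂ h₁ h₂ hd =>
    have hΓ z : Δ₁ z ++ Δ₂ z = if z ∈ p.fv ∨ z ∈ q.fv then Γ z else [] := by
      simpa [Env.add, Env.restrict, Pat.fv] using (congrFun hΔ z).symm
    have hΔ₁ : Δ₁ = Γ.restrict p := funext fun z => by
      by_cases hz : z ∈ p.fv
      · have := h₂.apply_eq_nil_of_notMem (Finset.disjoint_left.mp hd hz)
        simpa [Env.restrict, hz, this] using hΓ z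
      · simp [Env.restrict, hz, h₁.apply_eq_nil_of_notMem hz]
    have hΔ₂ : Δ₂ = Γ.restrict q := funext fun z => by
      by_cases hz : z ∈ q.fv
      · have := h₁.apply_eq_nil_of_notMem (Finset.disjoint_right.mp hd hz)
        simpa [Env.restrict, hz, this] using hΓ z
      · simp [Env.restrict, hz, h₂.apply_eq_nil_of_notMem hz]
    exact ⟨A₁, A₂, rfl, hΔ₁ ▸ h₁, hΔ₂ ▸ h₂, hd⟩

theorem MDeriv.size_pos {Γ t A} (m : MDeriv Γ t A) : 0 < m.size := by
  cases m <;> simp [MDeriv.size]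

theorem MDeriv.exists_of_eq_singleton {Δ u A σ} (m : MDeriv Δ u A) (hΔ : Δ = Env.empty)
    (hA : A = [σ]) : ∃ d : TDeriv Env.empty u σ, d.size < m.size := by
  cases m with
  | nil => cases hA
  | cons d m' =>
    obtain ⟨rfl, -⟩ := Env.add_eq_empty hΔ
    obtain ⟨rfl, -⟩ := List.cons_eq_cons.mp hA
    exact ⟨d, by simp only [MDeriv.size]; omega⟩

theorem MDeriv.exists_of_eq_append {Δ u C} (A B : List Ty) (m : MDeriv Δ u C)
    (hΔ : Δ = Env.empty) (hC : C = A ++ B) :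
    ∃ (m₁ : MDeriv Env.empty u A) (m₂ : MDeriv Env.empty u B),
      m₁.size + m₂.size = m.size + 1 := by
  induction A generalizing Δ C with
  | nil =>
    subst hΔ hC
    exact ⟨.nil u, m, by simp only [MDeriv.size]; omega⟩
  | cons σ A ih =>
    cases m with
    | nil => cases hC
    | cons d m' =>
      obtain ⟨rfl, hΔ'⟩ := Env.add_eq_empty hΔ
      obtain ⟨rfl, hC'⟩ := List.cons_eq_cons.mp hC
      obtain ⟨m₁, m₂, hm⟩ := ih m' hΔ' hC'
      exact ⟨.cons (Δ := Env.empty) d m₁, m₂, by simp only [MDeriv.size]; omega⟩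

mutual
theorem TDeriv.substitution :
    ∀ {Γ t σ} (d : TDeriv Γ t σ) {x : ℕ} {u : Tm} {Δ : Env} {A : List Ty}
    (m : MDeriv Δ u A), Δ = Env.empty → Γ x = A →
    ∃ d' : TDeriv (Γ.erase (.var x)) (Tm.subst x u t) σ, d'.size < d.size + m.size
  | _, _, _, .ax y σ, x, u, Δ, A, m, hΔ, hA => by
    by_cases hyx : y = x
    · subst hyx
      obtain ⟨du, hdu⟩ := m.exists_of_eq_singleton hΔ (by simpa [Env.single] using hA.symm)
      rw [Tm.subst, if_pos rfl, Env.single_erase_self]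
      exact ⟨du, by simp only [TDeriv.size]; omega⟩
    · rw [Tm.subst, if_neg hyx, Env.single_erase_of_ne _ hyx]
      exact ⟨.ax y σ, by simp only [TDeriv.size]; have := m.size_pos; omega⟩
  | _, _, _, @TDeriv.abs Γ _ _ p B d hp, x, u, Δ, A, m, hΔ, hA => by
    by_cases hxp : x ∈ p.fv
    · rw [Tm.subst, if_pos hxp, Env.erase_var_of_mem _ hxp]
      exact ⟨.abs d hp, by simp only [TDeriv.size]; have := m.size_pos; omega⟩
    · obtain ⟨d', hd'⟩ := d.substitution m hΔ (by rw [← hA, Env.erase_apply_of_notMem _ hxp])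
      have hp' : PatTy ((Γ.erase (.var x)).restrict p) p B :=
        (Env.restrict_erase_of_disjoint (p := .var x) _
          (Finset.disjoint_singleton_left.mpr hxp)).symm ▸ hp
      rw [Tm.subst, if_neg hxp, Env.erase_comm]
      exact ⟨.abs d' hp', by simp only [TDeriv.size]; omega⟩
  | _, _, _, @TDeriv.app Γ₁ Γ₂ _ _ _ _ d dm, x, u, Δ, A, m, hΔ, hA => by
    obtain ⟨m₁, m₂, hm⟩ := m.exists_of_eq_append (Γ₁ x) (Γ₂ x) hΔ hA.symm
    obtain ⟨d', hd'⟩ := d.substitution m₁ rfl rfl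
    obtain ⟨dm', hdm'⟩ := dm.substitution m₂ rfl rfl
    rw [Env.erase_add]
    exact ⟨.app d' dm', by simp only [TDeriv.size]; omega⟩
  | _, _, _, @TDeriv.pair Γ₁ Γ₂ _ _ _ _ dm dn, x, u, Δ, A, m, hΔ, hA => by
    obtain ⟨m₁, m₂, hm⟩ := m.exists_of_eq_append (Γ₁ x) (Γ₂ x) hΔ hA.symm
    obtain ⟨dm', hdm'⟩ := dm.substitution m₁ rfl rfl
    obtain ⟨dn', hdn'⟩ := dn.substitution m₂ rfl rfl
    rw [Env.erase_add]
    exact ⟨.pair dm' dn', by simp only [TDeriv.size]; omega⟩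
  | _, _, _, @TDeriv.esub Γ₁ Γ₂ _ _ p B _ d hp dm, x, u, Δ, A, m, hΔ, hA => by
    obtain ⟨m₁, m₂, hm⟩ := m.exists_of_eq_append (Γ₁.erase p x) (Γ₂ x) hΔ hA.symm
    obtain ⟨dm', hdm'⟩ := dm.substitution m₂ rfl rfl
    have := m₁.size_pos
    by_cases hxp : x ∈ p.fv
    · rw [Tm.subst, if_pos hxp, Env.erase_add, Env.erase_var_of_mem _ hxp]
      exact ⟨.esub d hp dm', by simp only [TDeriv.size]; omega⟩
    · obtain ⟨d', hd'⟩ := d.substitution m₁ rfl (Env.erase_apply_of_notMem _ hxp).symm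
      have hp' : PatTy ((Γ₁.erase (.var x)).restrict p) p B :=
        (Env.restrict_erase_of_disjoint (p := .var x) _
          (Finset.disjoint_singleton_left.mpr hxp)).symm ▸ hp
      rw [Tm.subst, if_neg hxp, Env.erase_add, Env.erase_comm Γ₁]
      exact ⟨.esub d' hp' dm', by simp only [TDeriv.size]; omega⟩
theorem MDeriv.substitution :
    ∀ {Γ t B} (m₀ : MDeriv Γ t B) {x : ℕ} {u : Tm} {Δ : Env} {A : List Ty}
    (m : MDeriv Δ u A), Δ = Env.empty → Γ x = A →
    ∃ m' : MDeriv (Γ.erase (.var x)) (Tm.subst x u t) B, m'.size < m₀.size + m.size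
  | _, _, _, .nil _, x, u, Δ, A, m, _, _ => by
    rw [Env.empty_erase]
    exact ⟨.nil _, by simp only [MDeriv.size]; have := m.size_pos; omega⟩
  | _, _, _, @MDeriv.cons Γ₁ Γ₂ _ _ _ d dm, x, u, Δ, A, m, hΔ, hA => by
    obtain ⟨m₁, m₂, hm⟩ := m.exists_of_eq_append (Γ₁ x) (Γ₂ x) hΔ hA.symm
    obtain ⟨d', hd'⟩ := d.substitution m₁ rfl rfl
    obtain ⟨dm', hdm'⟩ := dm.substitution m₂ rfl rfl
    rw [Env.erase_add]
    exact ⟨.cons d' dm', by simp only [MDeriv.size]; omega⟩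
end

inductive Tm.IsValue : Tm → Prop
  | lam (p : Pat) (t : Tm) : IsValue (.lam p t)
  | pair (t u : Tm) : IsValue (.pair t u)

theorem Steps.app_left {t t' : Tm} (u : Tm) (h : Steps t t') : Steps (.app t u) (.app t' u) :=
  h.lift (Tm.app · u) fun _ _ => Step.appL u

theorem Steps.esub_right {u u' : Tm} (t : Tm) (p : Pat) (h : Steps u u') :
    Steps (.esub t p u) (.esub t p u') :=
  h.lift (Tm.esub t p) fun _ _ => Step.subR t p

theorem TDeriv.exists_steps_value : ∀ {Γ t σ} (d : TDeriv Γ t σ), Γ = Env.empty →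
    ∃ (v : Tm) (Γ' : Env) (d' : TDeriv Γ' v σ),
      Γ' = Env.empty ∧ Steps t v ∧ v.IsValue ∧ d'.size ≤ d.size
  | _, _, _, .ax x σ, hΓ => absurd (congrFun hΓ x) (by simp [Env.single, Env.empty])
  | _, _, _, .abs d hp, hΓ => ⟨_, _, .abs d hp, hΓ, .refl, .lam _ _, le_rfl⟩
  | _, _, _, .pair m n, hΓ => ⟨_, _, .pair m n, hΓ, .refl, .pair _ _, le_rfl⟩
  | _, _, _, @TDeriv.app _ _ _ a _ _ df ma, hΓ => by
    obtain ⟨hΓf, hΔ⟩ := Env.add_eq_empty hΓ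
    obtain ⟨v, Γ', dv, hΓ', hfv, hv, hsize⟩ := df.exists_steps_value hΓf
    cases hv with
    | pair => cases dv
    | lam p body =>
      cases dv with
      | abs d₀ hp =>
        have hβ : Step (.app (.lam p body) a) (.esub body p a) := .root (.r1 [] p body a)
        obtain ⟨w, Γ'', dw, hΓ'', hw, hwv, hwsize⟩ :=
          (TDeriv.esub d₀ hp ma).exists_steps_value (by rw [hΓ', hΔ, Env.add_empty])
        refine ⟨w, Γ'', dw, hΓ'', ((hfv.app_left a).tail hβ).trans hw, hwv, ?_⟩
        simp only [TDeriv.size] at hsize hwsize ⊢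
        omega
  | _, _, _, @TDeriv.esub Γ₁ _ body _ (.var x) A a d₀ hp ma, hΓ => by
    obtain ⟨hΓ₁, hΔ⟩ := Env.add_eq_empty hΓ
    have hA : Γ₁ x = A := by
      simpa [Env.restrict, Env.single, Pat.fv] using congrFun hp.eq_single x
    obtain ⟨d', hd'⟩ := d₀.substitution ma hΔ hA
    obtain ⟨w, Γ', dw, hΓ', hw, hwv, hwsize⟩ := d'.exists_steps_value hΓ₁
    refine ⟨w, Γ', dw, hΓ', .head (.root (.r2 body x a)) hw, hwv, ?_⟩
    simp only [TDeriv.size] at hwsize ⊢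
    omega
  | _, _, _, @TDeriv.esub Γ₁ _ body _ (.pair p₁ p₂) _ a d₀ hp ma, hΓ => by
    obtain ⟨hΓ₁, hΔ⟩ := Env.add_eq_empty hΓ
    obtain ⟨A₁, A₂, hA, hp₁, hp₂, hdisj⟩ := hp.pair_inv
    obtain ⟨da, hda⟩ := ma.exists_of_eq_singleton hΔ hA
    obtain ⟨v, Γ', dv, hΓ', hav, hv, hsize⟩ := da.exists_steps_value rfl
    cases hv with
    | lam => cases dv
    | pair w₁ w₂ =>
      cases dv with
      | pair m₁ m₂ =>
        obtain ⟨rfl, rfl⟩ := Env.add_eq_empty hΓ'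
        have hp₂' : PatTy (((Γ₁.erase p₁).add Env.empty).restrict p₂) p₂ A₂ := by
          rwa [Env.add_empty, Env.restrict_erase_of_disjoint _ hdisj]
        have hmatch : Step (.esub body (.pair p₁ p₂) (.pair w₁ w₂))
            (.esub (.esub body p₁ w₁) p₂ w₂) := .root (.r3 body p₁ p₂ [] w₁ w₂)
        obtain ⟨w, Γ'', dw, hΓ'', hw, hwv, hwsize⟩ :=
          (TDeriv.esub (TDeriv.esub d₀ hp₁ m₁) hp₂' m₂).exists_steps_value
            (by rw [Env.add_empty, Env.add_empty, ← Env.erase_pair, hΓ₁])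
        refine ⟨w, Γ'', dw, hΓ'', ((hav.esub_right body _).tail hmatch).trans hw, hwv, ?_⟩
        simp only [TDeriv.size] at hsize hwsize ⊢
        omega
termination_by _ _ _ d => d.size
decreasing_by all_goals simp_all only [TDeriv.size]; omega

/-- Canonicity of closed typable terms of datatype-shaped types:
a closed typable term of functional type reduces to an abstraction, and one of
product type reduces to a pair. -/
theorem closed_typable_shape {Γ : Env} {t : Tm} (hc : t.fv = ∅) :
    (∀ (A : List Ty) (σ : Ty), Nonempty (TDeriv Γ t (.arr A σ)) →
      ∃ (p : Pat) (u : Tm), Steps t (.lam p u)) ∧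
    (∀ A B : List Ty, Nonempty (TDeriv Γ t (.prod A B)) →
      ∃ u v : Tm, Steps t (.pair u v)) := by
  constructor
  · rintro A σ ⟨d⟩
    obtain ⟨v, Γ', dv, -, hsteps, hv, -⟩ := d.exists_steps_value (d.env_eq_empty_of_closed hc)
    cases hv with
    | lam p u => exact ⟨p, u, hsteps⟩
    | pair => cases dv
  · rintro A B ⟨d⟩
    obtain ⟨v, Γ', dv, -, hsteps, hv, -⟩ := d.exists_steps_value (d.env_eq_empty_of_closed hc)
    cases hv with
    | lam => cases dv
    | pair u v => exact ⟨u, v, hsteps⟩
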